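/- arXiv:2409.01296 — 8 statements merged into one kernel-verified Lean document; each statement's English description precedes it below -/
import Mathlib

section
/- For every integer sequence x (indexed from 1) satisfying the Fibonacci recurrence x_j = x_{j-1} + x_{j-2} for all j ≥ 3, the following hold: (i) x_1 + x_2 + x_3 = 2·x_3, and (ii) for every natural number k ≥ 0, the sum of the first 4k+2 terms equals L_{2k+1} times the (2k+3)rd term, i.e., ∑_{i=1}^{4k+2} x_i = L_{2k+1} · x_{2k+3}. -/
/-!
Shift the sequence to `y n = x (n + 1)`, a Fibonacci-like sequence indexed from `0`.
Telescoping `y i = y (i + 2) - y (i + 1)` gives `∑ i < N, y i = y (N + 1) - y 1`, and the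
Lucas numbers satisfy `L m • y (n + m) = y (n + 2m) + (-1)^m • y n`. Taking `N = 4k + 2`,
`n = 1`, `m = 2k + 1` (odd) both sides of (ii) become `y (4k + 3) - y 1`.
-/

/-- The Lucas numbers: L 0 = 2, L 1 = 1, L (n+2) = L (n+1) + L n. -/
def lucas : ℕ → ℕ
  | 0 => 2
  | 1 => 1
  | n + 2 => lucas n + lucas (n + 1)

section FibLike

variable {G : Type*} [AddCommGroup G] {y : ℕ → G}

theorem sum_range_eq_sub_of_fib_rec (hy : ∀ n, y (n + 2) = y (n + 1) + y n) (N : ℕ) :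
    ∑ i ∈ Finset.range N, y i = y (N + 1) - y 1 := by
  induction N with
  | zero => simp
  | succ N ih =>
    rw [Finset.sum_range_succ, ih, hy N]
    abel

theorem lucas_smul_of_fib_rec (hy : ∀ n, y (n + 2) = y (n + 1) + y n) :
    ∀ m n, lucas m • y (n + m) = y (n + 2 * m) + (-1 : ℤ) ^ m • y n
  | 0, n => by simp [lucas, two_smul]
  | 1, n => by simp [lucas, hy n]
  | m + 2, n => by
    have ih₀ := lucas_smul_of_fib_rec hy m (n + 2)
    have ih₁ := lucas_smul_of_fib_rec hy (m + 1) (n + 1)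
    rw [show n + 2 + m = n + m + 2 by ring, show n + 2 + 2 * m = n + 2 * m + 2 by ring] at ih₀
    rw [show n + 1 + (m + 1) = n + m + 2 by ring,
      show n + 1 + 2 * (m + 1) = n + 2 * m + 3 by ring] at ih₁
    rw [show n + (m + 2) = n + m + 2 by ring, show n + 2 * (m + 2) = n + 2 * m + 2 + 2 by ring,
      lucas, add_smul, ih₀, ih₁, hy (n + 2 * m + 2), hy n, pow_succ, pow_succ]
    module

end FibLike

/-- For every Fibonacci-like integer sequence (indexed from 1),
(i) the sum of the first 3 terms is twice the third term, and
(ii) the sum of the first 4k+2 terms is L_{2k+1} times the (2k+3)rd term. -/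
theorem fib_like_trick (x : ℕ → ℤ)
    (hrec : ∀ j, 3 ≤ j → x j = x (j - 1) + x (j - 2)) :
    (x 1 + x 2 + x 3 = 2 * x 3) ∧
    (∀ k : ℕ, ∑ i ∈ Finset.Icc 1 (4 * k + 2), x i =
      (lucas (2 * k + 1) : ℤ) * x (2 * k + 3)) := by
  have hy : ∀ n, x (n + 1 + 2) = x (n + 1 + 1) + x (n + 1) := fun n => hrec (n + 3) (by omega)
  have hIcc : ∀ N, ∑ i ∈ Finset.Icc 1 N, x i = ∑ i ∈ Finset.range N, x (i + 1) := by
    intro N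
    induction N with
    | zero => simp
    | succ N ih => rw [Finset.sum_Icc_succ_top (by omega), ih, Finset.sum_range_succ]
  refine ⟨by linarith [hy 0], fun k => ?_⟩
  have hL := lucas_smul_of_fib_rec (y := fun n => x (n + 1)) hy (2 * k + 1) 1
  rw [(odd_two_mul_add_one k).neg_one_pow, nsmul_eq_mul] at hL
  rw [hIcc, sum_range_eq_sub_of_fib_rec (y := fun n => x (n + 1)) hy,
    show 2 * k + 3 = 1 + (2 * k + 1) + 1 by ring, hL]
  ring_nf
end

section
/- For every natural number k ≥ 0, the following four identities hold: F_{4k+2} − 1 = F_{2k}·L_{2k+2}; F_{4k+4} − 1 = F_{2k+3}·L_{2k+1}; F_{4k+3} − 1 = F_{2k+2}·L_{2k+1}; and F_{4k+5} − 1 = F_{2k+2}·L_{2k+3}. Equivalently, since the sum of the first n Fibonacci numbers equals F_{n+2} − 1, these factor the partial sums S^F_{4k}, S^F_{4k+2}, S^F_{4k+1}, S^F_{4k+3} as products of a Fibonacci and a Lucas number. -/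
set_option maxHeartbeats 1000000

lemma lucas_eq (n : ℕ) : lucas (n + 1) = Nat.fib n + Nat.fib (n + 2) := by
  induction n using Nat.twoStepInduction with
  | zero => rfl
  | one => rfl
  | more n ih1 ih2 =>
    have h2 : Nat.fib (n + 2) = Nat.fib n + Nat.fib (n + 1) := Nat.fib_add_two
    have h3 : Nat.fib (n + 3) = Nat.fib (n + 1) + Nat.fib (n + 2) := Nat.fib_add_two
    have h4 : Nat.fib (n + 4) = Nat.fib (n + 2) + Nat.fib (n + 3) := Nat.fib_add_two
    show lucas (n + 1) + lucas (n + 2) = Nat.fib (n + 2) + Nat.fib (n + 4)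
    have ih2' : lucas (n + 2) = Nat.fib (n + 1) + Nat.fib (n + 3) := ih2
    omega

lemma cassini (k : ℕ) :
    Nat.fib (2 * k + 1) ^ 2 = Nat.fib (2 * k) * Nat.fib (2 * k + 2) + 1 := by
  induction k with
  | zero => rfl
  | succ k ih =>
    have e : 2 * (k + 1) = 2 * k + 2 := by ring
    rw [e, Nat.fib_add_two (n := 2 * k + 2), Nat.fib_add_two (n := 2 * k + 1),
      Nat.fib_add_two (n := 2 * k)]
    rw [Nat.fib_add_two (n := 2 * k)] at ih
    zify at ih ⊢
    linear_combination ih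

/-- Four identities factoring the Fibonacci partial sums
`S^F_{4k}, S^F_{4k+2}, S^F_{4k+1}, S^F_{4k+3}` (where `S^F_n = F_{n+2} - 1`)
as products of a Fibonacci and a Lucas number. -/
theorem fib_partial_sum_factorizations (k : ℕ) :
    Nat.fib (4 * k + 2) - 1 = Nat.fib (2 * k) * lucas (2 * k + 2) ∧
    Nat.fib (4 * k + 4) - 1 = Nat.fib (2 * k + 3) * lucas (2 * k + 1) ∧
    Nat.fib (4 * k + 3) - 1 = Nat.fib (2 * k + 2) * lucas (2 * k + 1) ∧
    Nat.fib (4 * k + 5) - 1 = Nat.fib (2 * k + 2) * lucas (2 * k + 3) := by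
  have l1 : lucas (2 * k + 1) = Nat.fib (2 * k) + Nat.fib (2 * k + 2) := lucas_eq _
  have l2 : lucas (2 * k + 2) = Nat.fib (2 * k + 1) + Nat.fib (2 * k + 3) := lucas_eq _
  have l3 : lucas (2 * k + 3) = Nat.fib (2 * k + 2) + Nat.fib (2 * k + 4) := lucas_eq _
  have hc := cassini k
  have f2 : Nat.fib (2 * k + 2) = Nat.fib (2 * k) + Nat.fib (2 * k + 1) := Nat.fib_add_two
  have f3 : Nat.fib (2 * k + 3) = Nat.fib (2 * k + 1) + Nat.fib (2 * k + 2) := Nat.fib_add_two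
  have f4 : Nat.fib (2 * k + 4) = Nat.fib (2 * k + 2) + Nat.fib (2 * k + 3) := Nat.fib_add_two
  have g1 : Nat.fib (4 * k + 2) =
      Nat.fib (2 * k) * Nat.fib (2 * k + 1) + Nat.fib (2 * k + 1) * Nat.fib (2 * k + 2) := by
    rw [show 4 * k + 2 = 2 * k + (2 * k + 1) + 1 from by ring, Nat.fib_add]
  have g2 : Nat.fib (4 * k + 3) =
      Nat.fib (2 * k + 1) * Nat.fib (2 * k + 1) + Nat.fib (2 * k + 2) * Nat.fib (2 * k + 2) := by
    rw [show 4 * k + 3 = (2 * k + 1) + (2 * k + 1) + 1 from by ring, Nat.fib_add]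
  have g3 : Nat.fib (4 * k + 4) =
      Nat.fib (2 * k + 1) * Nat.fib (2 * k + 2) + Nat.fib (2 * k + 2) * Nat.fib (2 * k + 3) := by
    rw [show 4 * k + 4 = (2 * k + 1) + (2 * k + 2) + 1 from by ring, Nat.fib_add]
  have g4 : Nat.fib (4 * k + 5) =
      Nat.fib (2 * k + 2) * Nat.fib (2 * k + 2) + Nat.fib (2 * k + 3) * Nat.fib (2 * k + 3) := by
    rw [show 4 * k + 5 = (2 * k + 2) + (2 * k + 2) + 1 from by ring, Nat.fib_add]
  refine ⟨?_, ?_, ?_, ?_⟩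
  · have h : Nat.fib (4 * k + 2) = Nat.fib (2 * k) * lucas (2 * k + 2) + 1 := by
      rw [g1, l2, f3, f2]; rw [f2] at hc; zify at hc ⊢; linear_combination hc
    omega
  · have h : Nat.fib (4 * k + 4) = Nat.fib (2 * k + 3) * lucas (2 * k + 1) + 1 := by
      rw [g3, l1, f3, f2]; rw [f2] at hc; zify at hc ⊢; linear_combination hc
    omega
  · have h : Nat.fib (4 * k + 3) = Nat.fib (2 * k + 2) * lucas (2 * k + 1) + 1 := by
      rw [g2, l1, f2]; rw [f2] at hc; zify at hc ⊢; linear_combination hc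
    omega
  · have h : Nat.fib (4 * k + 5) = Nat.fib (2 * k + 2) * lucas (2 * k + 3) + 1 := by
      rw [g4, l3, f4, f3, f2]; rw [f2] at hc; zify at hc ⊢; linear_combination hc
    omega
end

section
/- Let n and m be natural numbers such that n + 4 ≤ 3m, n ≥ 11, and n ≥ m. Then, as real numbers, |(F_{n+2} − 1)/F_m − L_{n−m+2}| < 1. -/
theorem lucas_eq_fib_sub_one_add_fib_add_one :
    ∀ k : ℕ, (lucas k : ℤ) = Int.fib (k - 1) + Int.fib (k + 1)
  | 0 => rfl
  | 1 => rfl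
  | k + 2 => by
    rw [lucas, Nat.cast_add, lucas_eq_fib_sub_one_add_fib_add_one k,
      lucas_eq_fib_sub_one_add_fib_add_one (k + 1)]
    push_cast
    rw [show (k : ℤ) + 2 - 1 = k - 1 + 2 by ring, show (k : ℤ) + 2 + 1 = k + 1 + 2 by ring,
      Int.fib_add_two, Int.fib_add_two]
    ring

theorem Int.fib_one_sub_natCast (k : ℕ) : Int.fib (1 - k) = (-1) ^ k * Int.fib (k - 1) := by
  have h := Int.fib_add_two (-(k + 1 : ℕ))
  rw [Nat.cast_add_one, show -((k : ℤ) + 1) + 2 = 1 - k by ring,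
    show -((k : ℤ) + 1) + 1 = -k by ring, ← Nat.cast_add_one, Int.fib_neg_natCast,
    Int.fib_neg_natCast] at h
  rw [h, Int.fib_eq_fib_add_two_sub_fib_add_one (k - 1), sub_add_cancel,
    show (k : ℤ) - 1 + 2 = (k + 1 : ℕ) by push_cast; ring, Int.fib_natCast, Int.fib_natCast]
  ring

theorem lucas_mul_fib (k : ℕ) (m : ℤ) :
    lucas k * Int.fib m = Int.fib (m + k) + (-1) ^ k * Int.fib (m - k) := by
  have hadd := Int.fib_add m k
  have hsub := Int.fib_add m (-k)
  rw [← sub_eq_add_neg, Int.fib_neg_natCast, ← Int.fib_natCast, neg_add_eq_sub,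
    Int.fib_one_sub_natCast] at hsub
  have hsq : ((-1 : ℤ) ^ k) ^ 2 = 1 := by rw [← pow_mul, mul_comm, pow_mul, neg_one_sq, one_pow]
  rw [lucas_eq_fib_sub_one_add_fib_add_one]
  linear_combination -hadd - (-1) ^ k * hsub -
    (Int.fib (k - 1) * Int.fib m - Int.fib (m - 1) * Int.fib k) * hsq

theorem Int.abs_fib (n : ℤ) : |Int.fib n| = Nat.fib n.natAbs := by
  obtain ⟨n, rfl | rfl⟩ := n.eq_nat_or_neg <;> simp [Int.fib_neg_natCast, abs_mul]

theorem abs_fib_add_sub_lucas_mul_fib (m k : ℕ) :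
    |(Nat.fib (m + k) : ℤ) - lucas k * Nat.fib m| = Nat.fib ((m : ℤ) - k).natAbs := by
  rw [← Int.fib_natCast m, lucas_mul_fib, ← Nat.cast_add, Int.fib_natCast, sub_add_cancel_left,
    abs_neg, abs_mul, abs_pow, abs_neg, abs_one, one_pow, one_mul, Int.abs_fib]

theorem Nat.fib_add_one_lt_fib_add_two {n : ℕ} (hn : 2 ≤ n) : fib n + 1 < fib (n + 2) := by
  have : 2 ≤ fib (n + 1) := fib_mono (a := 3) (by omega)
  rw [fib_add_two]
  omega

/-- If n + 4 ≤ 3m, n ≥ 11 and n ≥ m, then (F_{n+2} - 1)/F_m is within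
distance 1 of the Lucas number L_{n-m+2}. -/
theorem fib_ratio_close_to_lucas (n m : ℕ)
    (h1 : n + 4 ≤ 3 * m) (h2 : 11 ≤ n) (h3 : m ≤ n) :
    |((Nat.fib (n + 2) : ℝ) - 1) / (Nat.fib m : ℝ) - (lucas (n - m + 2) : ℝ)| < 1 := by
  set k := n - m + 2
  have hfm : (0 : ℝ) < Nat.fib m := by exact_mod_cast Nat.fib_pos.2 (by omega)
  have hgap : Nat.fib ((m : ℤ) - k).natAbs + 1 < Nat.fib m := calc
    _ ≤ Nat.fib (m - 2) + 1 := by gcongr; omega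
    _ < Nat.fib (m - 2 + 2) := Nat.fib_add_one_lt_fib_add_two (by omega)
    _ = Nat.fib m := by rw [Nat.sub_add_cancel (by omega)]
  have key : |(Nat.fib (n + 2) : ℤ) - 1 - lucas k * Nat.fib m| < Nat.fib m := calc
    _ ≤ |(Nat.fib (m + k) : ℤ) - lucas k * Nat.fib m| + |1| := by
      rw [show m + k = n + 2 by omega, sub_right_comm]; exact abs_sub _ _
    _ < Nat.fib m := by
      rw [abs_fib_add_sub_lucas_mul_fib, abs_one]; exact_mod_cast hgap
  rw [div_sub' hfm.ne', abs_div, abs_of_pos hfm, div_lt_one hfm, mul_comm]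
  exact_mod_cast key
end

section
/- For every natural number k ≥ 0, the sum of the first 4k+2 Lucas numbers satisfies S^L_{4k+2} = L_{4k+4} − 3 = L_{2k+3}·L_{2k+1}, and 2k+3 is the largest index of a Lucas number dividing this sum: for every m > 2k+3, L_m does not divide L_{4k+4} − 3. -/
open Real goldenRatio

theorem coe_lucas : ∀ n, (lucas n : ℝ) = φ ^ n + ψ ^ n
  | 0 => by norm_num [lucas]
  | 1 => by simp [lucas]
  | n + 2 => by
    rw [lucas, Nat.cast_add, coe_lucas n, coe_lucas (n + 1)]
    linear_combination (-φ ^ n) * goldenRatio_sq + (-ψ ^ n) * goldenConj_sq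

theorem lucas_add_two_mul (a b : ℕ) :
    (lucas (a + 2 * b) : ℤ) + (-1) ^ b * lucas a = lucas (a + b) * lucas b := by
  have hpow (x y : ℝ) : x ^ (a + 2 * b) + y ^ (a + 2 * b) + (x * y) ^ b * (x ^ a + y ^ a) =
      (x ^ (a + b) + y ^ (a + b)) * (x ^ b + y ^ b) := by ring
  have h : ((lucas (a + 2 * b) + (-1) ^ b * lucas a : ℤ) : ℝ) = (lucas (a + b) * lucas b : ℤ) := by
    push_cast
    rw [coe_lucas, coe_lucas, coe_lucas, coe_lucas, ← goldenRatio_mul_goldenConj]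
    exact hpow φ ψ
  exact_mod_cast h

theorem lucas_le_lucas {a b : ℕ} (ha : 1 ≤ a) (hab : a ≤ b) : lucas a ≤ lucas b := by
  have hmono : Monotone fun n => lucas (n + 1) :=
    monotone_nat_of_le_succ fun n => (Nat.le_add_left _ _ : lucas (n + 1) ≤ lucas n + lucas (n + 1))
  obtain ⟨a, rfl⟩ := Nat.exists_eq_add_of_le' ha
  obtain ⟨b, rfl⟩ := Nat.exists_eq_add_of_le' (ha.trans hab)
  exact hmono (by omega)

theorem sum_Icc_lucas_add_three (n : ℕ) : ∑ i ∈ Finset.Icc 1 n, lucas i + 3 = lucas (n + 2) := by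
  induction n with
  | zero => rfl
  | succ n ih =>
    rw [Finset.sum_Icc_succ_top (Nat.le_add_left 1 n)]
    have : lucas (n + 1 + 2) = lucas (n + 1) + lucas (n + 2) := rfl
    omega

theorem lucas_four_mul_add_four (k : ℕ) :
    lucas (4 * k + 4) = lucas (2 * k + 3) * lucas (2 * k + 1) + 3 := by
  have h := lucas_add_two_mul 2 (2 * k + 1)
  rw [(odd_two_mul_add_one k).neg_one_pow, show 2 + 2 * (2 * k + 1) = 4 * k + 4 by ring,
    show 2 + (2 * k + 1) = 2 * k + 3 by ring, show lucas 2 = 3 from rfl] at h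
  have h' : (lucas (4 * k + 4) : ℤ) = lucas (2 * k + 3) * lucas (2 * k + 1) + 3 := by
    linear_combination h
  exact_mod_cast h'

theorem lucas_add_three_lt {a j : ℕ} (ha : 4 ≤ a) (hj : 1 ≤ j) : lucas a + 3 < lucas (a + j) := by
  obtain ⟨b, rfl⟩ := Nat.exists_eq_add_of_le' ha
  have h4 : 4 ≤ lucas (b + 3) := lucas_le_lucas (a := 3) (by norm_num) (by omega)
  have hmono : lucas (b + 5) ≤ lucas (b + 4 + j) := lucas_le_lucas (by omega) (by omega)
  have h5 : lucas (b + 5) = lucas (b + 3) + lucas (b + 4) := rfl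
  omega

theorem not_lucas_dvd_lucas_sub_three_of_le {N m : ℕ} (hN : 3 ≤ N) (hm : N ≤ m) :
    ¬ lucas m ∣ lucas N - 3 := by
  have h4 : 4 ≤ lucas N := lucas_le_lucas (a := 3) (by norm_num) hN
  have hle : lucas N ≤ lucas m := lucas_le_lucas (by omega) hm
  intro h
  have := Nat.le_of_dvd (by omega) h
  omega

theorem not_lucas_dvd_lucas_sub_three_of_lt {N m : ℕ} (hm : N + 4 ≤ 2 * m) (hmN : m < N) :
    ¬ lucas m ∣ lucas N - 3 := by
  obtain ⟨a, j, rfl, rfl⟩ : ∃ a j, m = a + j ∧ N = a + 2 * j :=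
    ⟨2 * m - N, N - m, by omega, by omega⟩
  have ha : 4 ≤ a := by omega
  have hj : 1 ≤ j := by omega
  have h7 : 7 ≤ lucas a := lucas_le_lucas (a := 4) (by norm_num) ha
  have hN : lucas a ≤ lucas (a + 2 * j) := lucas_le_lucas (by omega) (by omega)
  have hlt := lucas_add_three_lt ha hj
  intro h
  have hZ : (lucas (a + j) : ℤ) ∣ lucas (a + 2 * j) - 3 := by
    have := Int.natCast_dvd_natCast.mpr h
    rwa [Nat.cast_sub (by omega), Nat.cast_ofNat] at this
  have key : (lucas (a + 2 * j) : ℤ) - 3 = lucas (a + j) * lucas j - ((-1) ^ j * lucas a + 3) := by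
    linear_combination lucas_add_two_mul a j
  have hr : (lucas (a + j) : ℤ) ∣ (-1) ^ j * lucas a + 3 := by
    rwa [key, dvd_sub_right (dvd_mul_right _ _)] at hZ
  have habs : |(-1) ^ j * (lucas a : ℤ) + 3| < lucas (a + j) := by
    calc |(-1) ^ j * (lucas a : ℤ) + 3| ≤ |(-1) ^ j * (lucas a : ℤ)| + |3| := abs_add_le _ _
      _ = lucas a + 3 := by simp
      _ < lucas (a + j) := by exact_mod_cast hlt
  have hzero := Int.eq_zero_of_abs_lt_dvd hr habs
  have : (lucas a : ℤ) = 3 := by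
    simpa [abs_mul] using congrArg abs (eq_neg_of_add_eq_zero_left hzero)
  omega

/-- The sum of the first 4k+2 Lucas numbers equals L_{4k+4} - 3 = L_{2k+3} * L_{2k+1},
and 2k+3 is the largest index of a Lucas number dividing this sum. -/
theorem lucas_partial_sum_4k2 (k : ℕ) :
    (∑ i ∈ Finset.Icc 1 (4 * k + 2), lucas i) = lucas (4 * k + 4) - 3 ∧
    lucas (4 * k + 4) - 3 = lucas (2 * k + 3) * lucas (2 * k + 1) ∧
    (∀ m : ℕ, 2 * k + 3 < m → ¬ lucas m ∣ lucas (4 * k + 4) - 3) := by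
  have hsum : ∑ i ∈ Finset.Icc 1 (4 * k + 2), lucas i + 3 = lucas (4 * k + 4) :=
    sum_Icc_lucas_add_three (4 * k + 2)
  have hprod := lucas_four_mul_add_four k
  refine ⟨by omega, by omega, fun m hm => ?_⟩
  rcases lt_or_ge m (4 * k + 4) with hlt | hge
  · exact not_lucas_dvd_lucas_sub_three_of_lt (by omega) hlt
  · exact not_lucas_dvd_lucas_sub_three_of_le (by omega) hge
end

section
/- Let a, b, c, d be nonnegative integers with L_a·L_b = L_c·L_d. Then one of the following holds: (1) a = c and b = d; (2) a = d and b = c; or (3) (a,b,c,d) is one of (0,0,1,3), (0,0,3,1), (1,3,0,0), (3,1,0,0), corresponding to the equality L_0·L_0 = L_1·L_3 = 4. -/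
lemma lucas_add_two (n : ℕ) : lucas (n + 2) = lucas n + lucas (n + 1) := rfl

lemma lucas_pos : ∀ n, 0 < lucas n
  | 0 => by decide
  | 1 => by decide
  | n + 2 => by rw [lucas_add_two]; have := lucas_pos n; omega

lemma lucas_succ_lt (n : ℕ) : lucas (n + 1) < lucas (n + 2) := by
  rw [lucas_add_two]; have := lucas_pos n; omega

lemma lucas_lt_add (m k : ℕ) : lucas (m + 1) < lucas (m + 2 + k) := by
  induction k with
  | zero => exact lucas_succ_lt m
  | succ k ih =>
      have h2 : lucas (m + 1 + k + 1) < lucas (m + 1 + k + 2) := lucas_succ_lt (m + 1 + k)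
      have e1 : m + 2 + k = m + 1 + k + 1 := by omega
      have e2 : m + 2 + (k + 1) = m + 1 + k + 2 := by omega
      rw [e1] at ih; rw [e2]
      exact ih.trans h2

lemma lucas_lt_lucas {m n : ℕ} (hm : 1 ≤ m) (h : m < n) : lucas m < lucas n := by
  obtain ⟨m', rfl⟩ : ∃ m', m = m' + 1 := ⟨m - 1, by omega⟩
  obtain ⟨k, rfl⟩ : ∃ k, n = m' + 2 + k := ⟨n - (m' + 2), by omega⟩
  exact lucas_lt_add m' k

lemma lucas_le_lucas_s10 {m n : ℕ} (hm : 1 ≤ m) (h : m ≤ n) : lucas m ≤ lucas n := by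
  rcases eq_or_lt_of_le h with rfl | h'
  · exact le_rfl
  · exact (lucas_lt_lucas hm h').le

lemma lucas_le_lucas' {m n : ℕ} (h : m ≤ n) (h2 : ¬(m = 0 ∧ n = 1)) : lucas m ≤ lucas n := by
  rcases Nat.eq_zero_or_pos m with rfl | hm
  · rcases n with _ | _ | n
    · exact le_rfl
    · exact absurd ⟨rfl, rfl⟩ h2
    · have h3 : lucas 2 ≤ lucas (n + 1 + 1) := lucas_le_lucas_s10 (by norm_num) (by omega)
      rw [show lucas 2 = 3 from rfl] at h3
      show 2 ≤ lucas (n + 1 + 1)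
      omega
  · exact lucas_le_lucas_s10 hm h

lemma lucas_inj {m n : ℕ} (h : lucas m = lucas n) : m = n := by
  by_contra hne
  wlog hlt : m < n generalizing m n
  · exact this h.symm (Ne.symm hne) (by omega)
  rcases Nat.eq_zero_or_pos m with rfl | hm
  · rcases n with _ | _ | n
    · omega
    · simp [show lucas 0 = 2 from rfl, show lucas 1 = 1 from rfl] at h
    · have h3 : lucas 2 ≤ lucas (n + 1 + 1) := lucas_le_lucas_s10 (by norm_num) (by omega)
      rw [show lucas 0 = 2 from rfl] at h
      rw [show lucas 2 = 3 from rfl] at h3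
      omega
  · exact absurd (lucas_lt_lucas hm hlt) (by omega)

lemma lucas_identity : ∀ n k : ℕ, (lucas (n + k) * lucas n : ℤ) = lucas (2 * n + k) + (-1) ^ n * lucas k
  | 0, k => by simp [show lucas 0 = 2 from rfl]; push_cast; ring
  | 1, k => by
      rw [show 2 * 1 + k = k + 2 from by ring, lucas_add_two k,
        show (1 : ℕ) + k = k + 1 from by ring, show lucas 1 = 1 from rfl]
      push_cast; ring
  | n + 2, k => by
      have h1 := lucas_identity n (k + 2)
      have h2 := lucas_identity (n + 1) (k + 1)
      rw [show n + (k + 2) = n + 2 + k from by ring] at h1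
      rw [show n + 1 + (k + 1) = n + 2 + k from by ring] at h2
      rw [show 2 * n + (k + 2) = 2 * n + k + 2 from by ring] at h1
      rw [show 2 * (n + 1) + (k + 1) = 2 * n + k + 3 from by ring] at h2
      rw [show 2 * (n + 2) + k = (2 * n + k + 2) + 2 from by ring, lucas_add_two (2 * n + k + 2),
        show 2 * n + k + 2 + 1 = 2 * n + k + 3 from by ring, lucas_add_two n]
      rw [lucas_add_two k] at h1
      push_cast [pow_succ] at h1 h2 ⊢
      linear_combination h1 + h2

lemma lucas_mul_even (n k : ℕ) (h : Even n) :
    lucas (n + k) * lucas n = lucas (2 * n + k) + lucas k := by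
  have h1 := lucas_identity n k
  rw [h.neg_one_pow] at h1
  have h2 : (lucas (n + k) * lucas n : ℤ) = lucas (2 * n + k) + lucas k := by linarith
  exact_mod_cast h2

lemma lucas_mul_odd (n k : ℕ) (h : Odd n) :
    lucas (n + k) * lucas n + lucas k = lucas (2 * n + k) := by
  have h1 := lucas_identity n k
  rw [h.neg_one_pow] at h1
  have h2 : (lucas (n + k) * lucas n + lucas k : ℤ) = lucas (2 * n + k) := by linarith
  exact_mod_cast h2

lemma lucas_le_four {n : ℕ} (h : lucas n ≤ 4) : n ≤ 3 := by
  by_contra hn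
  have h4 : lucas 4 ≤ lucas n := lucas_le_lucas_s10 (by norm_num) (by omega)
  rw [show lucas 4 = 7 from rfl] at h4
  omega

lemma product_four {c d : ℕ} (h : lucas c * lucas d = 4) :
    (c = 0 ∧ d = 0) ∨ (c = 1 ∧ d = 3) ∨ (c = 3 ∧ d = 1) := by
  have hc := lucas_pos c
  have hd := lucas_pos d
  have h1 : lucas c ≤ 4 := by nlinarith
  have h2 : lucas d ≤ 4 := by nlinarith
  have hc3 := lucas_le_four h1
  have hd3 := lucas_le_four h2
  interval_cases c <;> interval_cases d <;> revert h <;> decide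

lemma two_mul_ne (b c d : ℕ) (hb : 1 ≤ b) (hc : 1 ≤ c) (hcd : c ≤ d)
    (h : 2 * lucas b = lucas c * lucas d) : False := by
  obtain ⟨q, rfl⟩ : ∃ q, d = c + q := ⟨d - c, by omega⟩
  rcases Nat.even_or_odd c with hce | hco
  · -- c even, hence c ≥ 2
    obtain ⟨c'', rfl⟩ : ∃ c'', c = c'' + 2 := by
      rcases hce with ⟨t, ht⟩; exact ⟨c - 2, by omega⟩
    have hQ := lucas_mul_even (c'' + 2) q hce
    rw [mul_comm] at hQ
    rw [hQ, show 2 * (c'' + 2) + q = 2 * c'' + q + 4 from by ring] at h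
    -- h : 2 * lucas b = lucas (2 * c'' + q + 4) + lucas q
    have A1 : lucas (2 * c'' + q + 4) = lucas (2 * c'' + q + 2) + lucas (2 * c'' + q + 3) :=
      lucas_add_two _
    have A2 : lucas (2 * c'' + q + 3) = lucas (2 * c'' + q + 1) + lucas (2 * c'' + q + 2) :=
      lucas_add_two _
    rcases lt_trichotomy b (2 * c'' + q + 3) with hbu | hbu | hbu
    · -- b ≤ 2c''+q+2
      have d1 : lucas b ≤ lucas (2 * c'' + q + 2) := lucas_le_lucas_s10 hb (by omega)
      have d2 : lucas (2 * c'' + q + 2) ≤ lucas (2 * c'' + q + 3) := lucas_le_lucas_s10 (by omega) (by omega)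
      have d3 := lucas_pos q
      omega
    · -- b = 2c''+q+3
      subst hbu
      have hq : q = 2 * c'' + q + 1 := lucas_inj (by omega)
      omega
    · -- b ≥ 2c''+q+4
      have d1 : lucas (2 * c'' + q + 4) ≤ lucas b := lucas_le_lucas_s10 (by omega) (by omega)
      have d2 : lucas q ≤ lucas (2 * c'' + q + 2) := lucas_le_lucas' (by omega) (by omega)
      have d3 := lucas_pos (2 * c'' + q + 3)
      omega
  · -- c odd
    have hQ := lucas_mul_odd c q hco
    rw [mul_comm] at hQ
    -- hQ : lucas c * lucas (c+q) + lucas q = lucas (2*c+q)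
    obtain ⟨c', rfl⟩ : ∃ c', c = c' + 1 := ⟨c - 1, by omega⟩
    rw [show 2 * (c' + 1) + q = 2 * c' + q + 2 from by ring] at hQ
    have h2 : 2 * lucas b + lucas q = lucas (2 * c' + q + 2) := by omega
    have A1 : lucas (2 * c' + q + 2) = lucas (2 * c' + q) + lucas (2 * c' + q + 1) :=
      lucas_add_two _
    rcases lt_trichotomy b (2 * c' + q + 1) with hbu | hbu | hbu
    · -- b ≤ 2c'+q
      rcases Nat.lt_or_ge b (2 * c' + q) with hbu2 | hbu2
      · -- b ≤ u - 1, so u ≥ 2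
        obtain ⟨u₂, hu⟩ : ∃ u₂, 2 * c' + q = u₂ + 2 := ⟨2 * c' + q - 2, by omega⟩
        rw [hu] at h2 A1
        rw [show u₂ + 2 + 2 = u₂ + 4 from by ring] at h2 A1
        rw [show u₂ + 2 + 1 = u₂ + 3 from by ring] at A1
        have A2 : lucas (u₂ + 3) = lucas (u₂ + 1) + lucas (u₂ + 2) := lucas_add_two _
        have d1 : lucas b ≤ lucas (u₂ + 1) := lucas_le_lucas_s10 hb (by omega)
        have d2 : lucas (u₂ + 1) < lucas (u₂ + 2) := lucas_succ_lt u₂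
        have d3 : lucas q ≤ lucas (u₂ + 2) := lucas_le_lucas' (by omega) (by omega)
        omega
      · -- b = u, u ≥ 1
        have hbu3 : b = 2 * c' + q := by omega
        subst hbu3
        obtain ⟨u₁, hu⟩ : ∃ u₁, 2 * c' + q = u₁ + 1 := ⟨2 * c' + q - 1, by omega⟩
        rw [hu] at h2 A1
        rw [show u₁ + 1 + 2 = u₁ + 3 from by ring] at h2 A1
        rw [show u₁ + 1 + 1 = u₁ + 2 from by ring] at A1
        have A2 : lucas (u₁ + 2) = lucas u₁ + lucas (u₁ + 1) := lucas_add_two _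
        have hq : q = u₁ := lucas_inj (by omega)
        omega
    · -- b = u + 1
      subst hbu
      rcases Nat.eq_zero_or_pos (2 * c' + q) with h0 | h0
      · have hq0 : q = 0 := by omega
        have hc0 : c' = 0 := by omega
        subst hq0; subst hc0
        norm_num at h2
        rw [show lucas 0 = 2 from rfl, show lucas 1 = 1 from rfl, show lucas 2 = 3 from rfl] at h2
        omega
      · have d1 : lucas (2 * c' + q) ≤ lucas (2 * c' + q + 1) := lucas_le_lucas_s10 h0 (by omega)
        have d2 := lucas_pos q
        omega
    · -- b ≥ u + 2
      have d1 : lucas (2 * c' + q + 2) ≤ lucas b := lucas_le_lucas_s10 (by omega) (by omega)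
      have d2 := lucas_pos q
      have d3 := lucas_pos b
      omega

lemma eq_sum_eq (a b c d : ℕ) (ha : 1 ≤ a) (hab : a ≤ b) (hc : 1 ≤ c) (hcd : c ≤ d)
    (hst : a + b = c + d) (h : lucas a * lucas b = lucas c * lucas d) : a = c ∧ b = d := by
  obtain ⟨p, rfl⟩ : ∃ p, b = a + p := ⟨b - a, by omega⟩
  obtain ⟨q, rfl⟩ : ∃ q, d = c + q := ⟨d - c, by omega⟩
  have hsum : 2 * a + p = 2 * c + q := by omega
  rcases Nat.even_or_odd a with hae | hao <;> rcases Nat.even_or_odd c with hce | hco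
  · have hP := lucas_mul_even a p hae
    have hQ := lucas_mul_even c q hce
    rw [mul_comm] at hP hQ
    rw [hsum] at hP
    have hpq : lucas p = lucas q := by omega
    have := lucas_inj hpq
    omega
  · have hP := lucas_mul_even a p hae
    have hQ := lucas_mul_odd c q hco
    rw [mul_comm] at hP hQ
    rw [hsum] at hP
    have := lucas_pos p
    have := lucas_pos q
    omega
  · have hP := lucas_mul_odd a p hao
    have hQ := lucas_mul_even c q hce
    rw [mul_comm] at hP hQ
    rw [hsum] at hP
    have := lucas_pos p
    have := lucas_pos q
    omega
  · have hP := lucas_mul_odd a p hao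
    have hQ := lucas_mul_odd c q hco
    rw [mul_comm] at hP hQ
    rw [hsum] at hP
    have hpq : lucas p = lucas q := by omega
    have := lucas_inj hpq
    omega

lemma lt_sum_ne (a b c d : ℕ) (ha : 1 ≤ a) (hab : a ≤ b) (hc : 1 ≤ c) (hcd : c ≤ d)
    (hst : a + b < c + d) (h : lucas a * lucas b = lucas c * lucas d) : False := by
  obtain ⟨p, rfl⟩ : ∃ p, b = a + p := ⟨b - a, by omega⟩
  obtain ⟨q, rfl⟩ : ∃ q, d = c + q := ⟨d - c, by omega⟩
  rcases Nat.even_or_odd a with hae | hao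
  · -- a even, a ≥ 2
    obtain ⟨a'', rfl⟩ : ∃ a'', a = a'' + 2 := by
      rcases hae with ⟨t, ht⟩; exact ⟨a - 2, by omega⟩
    have hP := lucas_mul_even (a'' + 2) p hae
    rw [mul_comm, show 2 * (a'' + 2) + p = 2 * a'' + p + 4 from by ring] at hP
    have dp : lucas p ≤ lucas (2 * a'' + p) := lucas_le_lucas' (by omega) (by omega)
    have A1 : lucas (2 * a'' + p + 2) = lucas (2 * a'' + p) + lucas (2 * a'' + p + 1) := lucas_add_two _
    have A2 : lucas (2 * a'' + p + 3) = lucas (2 * a'' + p + 1) + lucas (2 * a'' + p + 2) := lucas_add_two _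
    have A3 : lucas (2 * a'' + p + 4) = lucas (2 * a'' + p + 2) + lucas (2 * a'' + p + 3) := lucas_add_two _
    have A4 : lucas (2 * a'' + p + 5) = lucas (2 * a'' + p + 3) + lucas (2 * a'' + p + 4) := lucas_add_two _
    have pe1 := lucas_pos (2 * a'' + p + 1)
    rcases Nat.even_or_odd c with hce | hco
    · have hQ := lucas_mul_even c q hce
      rw [mul_comm] at hQ
      have m1 : lucas (2 * a'' + p + 5) ≤ lucas (2 * c + q) := lucas_le_lucas_s10 (by omega) (by omega)
      have := lucas_pos q
      omega
    · obtain ⟨c', rfl⟩ : ∃ c', c = c' + 1 := ⟨c - 1, by omega⟩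
      have hQ := lucas_mul_odd (c' + 1) q hco
      rw [mul_comm, show 2 * (c' + 1) + q = 2 * c' + q + 2 from by ring] at hQ
      rcases Nat.lt_or_ge (2 * a'' + p + 5) (2 * c' + q + 2) with hw | hw
      · -- t ≥ s + 2
        have dq : lucas q ≤ lucas (2 * c' + q) := lucas_le_lucas' (by omega) (by omega)
        have B1 : lucas (2 * c' + q + 2) = lucas (2 * c' + q) + lucas (2 * c' + q + 1) := lucas_add_two _
        have m1 : lucas (2 * a'' + p + 5) ≤ lucas (2 * c' + q + 1) := lucas_le_lucas_s10 (by omega) (by omega)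
        omega
      · -- t = s + 1
        have hw2 : 2 * c' + q + 2 = 2 * a'' + p + 5 := by omega
        rw [hw2] at hQ
        by_cases hq1 : q = 2 * a'' + p + 3
        · have dq : lucas q = lucas (2 * a'' + p + 3) := by rw [hq1]
          have := lucas_pos p
          omega
        · -- q ≠ e+3; q = e+2 impossible by parity; q ≤ e+1
          have hq2 : q ≤ 2 * a'' + p + 1 := by omega
          have dq : lucas q ≤ lucas (2 * a'' + p + 1) := lucas_le_lucas' hq2 (by omega)
          omega
  · -- a odd
    have hP := lucas_mul_odd a p hao
    rw [mul_comm] at hP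
    rcases Nat.even_or_odd c with hce | hco
    · have hQ := lucas_mul_even c q hce
      rw [mul_comm] at hQ
      have m1 : lucas (2 * a + p) ≤ lucas (2 * c + q) := lucas_le_lucas_s10 (by omega) (by omega)
      have := lucas_pos p
      have := lucas_pos q
      omega
    · obtain ⟨c', rfl⟩ : ∃ c', c = c' + 1 := ⟨c - 1, by omega⟩
      have hQ := lucas_mul_odd (c' + 1) q hco
      rw [mul_comm, show 2 * (c' + 1) + q = 2 * c' + q + 2 from by ring] at hQ
      have dq : lucas q ≤ lucas (2 * c' + q) := lucas_le_lucas' (by omega) (by omega)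
      have B1 : lucas (2 * c' + q + 2) = lucas (2 * c' + q) + lucas (2 * c' + q + 1) := lucas_add_two _
      have m1 : lucas (2 * a + p) ≤ lucas (2 * c' + q + 1) := lucas_le_lucas_s10 (by omega) (by omega)
      have := lucas_pos p
      omega

lemma key_lemma (a b c d : ℕ) (hab : a ≤ b) (hcd : c ≤ d)
    (h : lucas a * lucas b = lucas c * lucas d) :
    (a = c ∧ b = d) ∨ (a = 0 ∧ b = 0 ∧ c = 1 ∧ d = 3) ∨ (a = 1 ∧ b = 3 ∧ c = 0 ∧ d = 0) := by
  rcases Nat.eq_zero_or_pos a with rfl | ha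
  · rcases Nat.eq_zero_or_pos c with rfl | hc
    · rw [show lucas 0 = 2 from rfl] at h
      have hbd : lucas b = lucas d := by omega
      exact Or.inl ⟨rfl, lucas_inj hbd⟩
    · rcases Nat.eq_zero_or_pos b with rfl | hb
      · rw [show lucas 0 = 2 from rfl] at h
        rcases product_four h.symm with ⟨rfl, rfl⟩ | ⟨rfl, rfl⟩ | ⟨rfl, rfl⟩
        · omega
        · exact Or.inr (Or.inl ⟨rfl, rfl, rfl, rfl⟩)
        · omega
      · rw [show lucas 0 = 2 from rfl] at h
        exact (two_mul_ne b c d hb hc hcd h).elim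
  · rcases Nat.eq_zero_or_pos c with rfl | hc
    · rcases Nat.eq_zero_or_pos d with rfl | hd
      · rw [show lucas 0 = 2 from rfl] at h
        have h4 : lucas a * lucas b = 4 := by omega
        rcases product_four h4 with ⟨rfl, rfl⟩ | ⟨rfl, rfl⟩ | ⟨rfl, rfl⟩
        · omega
        · exact Or.inr (Or.inr ⟨rfl, rfl, rfl, rfl⟩)
        · omega
      · rw [show lucas 0 = 2 from rfl] at h
        exact (two_mul_ne d a b hd ha hab h.symm).elim
    · rcases lt_trichotomy (a + b) (c + d) with hlt | heq | hgt
      · exact (lt_sum_ne a b c d ha hab hc hcd hlt h).elim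
      · exact Or.inl (eq_sum_eq a b c d ha hab hc hcd heq h)
      · exact (lt_sum_ne c d a b hc hcd ha hab hgt h.symm).elim

/-- Classification of the solutions of `L_a * L_b = L_c * L_d`: the decomposition
of a number as a product of two Lucas numbers is unique up to order, except for
2 * 2 = 1 * 4. -/
theorem lucas_lucas_product_classification (a b c d : ℕ)
    (h : lucas a * lucas b = lucas c * lucas d) :
    (a = c ∧ b = d) ∨ (a = d ∧ b = c) ∨
    ((a, b, c, d) = (0, 0, 1, 3) ∨ (a, b, c, d) = (0, 0, 3, 1) ∨
      (a, b, c, d) = (1, 3, 0, 0) ∨ (a, b, c, d) = (3, 1, 0, 0)) := by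
  rcases le_total a b with hab | hab <;> rcases le_total c d with hcd | hcd
  · rcases key_lemma a b c d hab hcd h with ⟨h1, h2⟩ | ⟨rfl, rfl, rfl, rfl⟩ | ⟨rfl, rfl, rfl, rfl⟩
    · exact Or.inl ⟨h1, h2⟩
    · exact Or.inr (Or.inr (Or.inl rfl))
    · exact Or.inr (Or.inr (Or.inr (Or.inr (Or.inl rfl))))
  · rcases key_lemma a b d c hab hcd (by rw [h, mul_comm]) with
      ⟨h1, h2⟩ | ⟨rfl, rfl, rfl, rfl⟩ | ⟨rfl, rfl, rfl, rfl⟩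
    · exact Or.inr (Or.inl ⟨h1, h2⟩)
    · exact Or.inr (Or.inr (Or.inr (Or.inl rfl)))
    · exact Or.inr (Or.inr (Or.inr (Or.inr (Or.inl rfl))))
  · rcases key_lemma b a c d hab hcd (by rw [← h, mul_comm]) with
      ⟨h1, h2⟩ | ⟨rfl, rfl, rfl, rfl⟩ | ⟨rfl, rfl, rfl, rfl⟩
    · exact Or.inr (Or.inl ⟨h2, h1⟩)
    · exact Or.inr (Or.inr (Or.inl rfl))
    · exact Or.inr (Or.inr (Or.inr (Or.inr (Or.inr rfl))))
  · rcases key_lemma b a d c hab hcd (by rw [mul_comm, h, mul_comm]) with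
      ⟨h1, h2⟩ | ⟨rfl, rfl, rfl, rfl⟩ | ⟨rfl, rfl, rfl, rfl⟩
    · exact Or.inl ⟨h2, h1⟩
    · exact Or.inr (Or.inr (Or.inr (Or.inl rfl)))
    · exact Or.inr (Or.inr (Or.inr (Or.inr (Or.inr rfl))))
end

section
/- Let S_n = ∑_{i=1}^n (−1)^{i−1} F_i denote the partial sums of the signed Fibonacci sequence (the Lucas sequence U(−1,−1), whose n-th term is (−1)^{n−1}F_n). Then for every k ≥ 1 the integer identities S_{4k} = −F_{2k}·L_{2k−1}, S_{4k+1} = F_{2k−1}·L_{2k+1}, S_{4k+2} = −F_{2k}·L_{2k+1}, and S_{4k+3} = F_{2k+2}·L_{2k} hold. Moreover, for every k ≥ 2, the largest index m such that F_m divides S_n is: m = 2k when n = 4k or n = 4k+2; m = 2k−1 when n = 4k+1; and m = 2k+2 when n = 4k+3 (i.e., in each case F_m divides |S_n| and F_{m'} does not divide |S_n| for any m' > m). -/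
/-- Partial sums of the signed Fibonacci sequence U(-1,-1), whose n-th term is
(-1)^(n-1) F_n. -/
def signedFibSum (n : ℕ) : ℤ := ∑ i ∈ Finset.Icc 1 n, (-1) ^ (i - 1) * (Nat.fib i : ℤ)

/-! Since `S (n + 1) = (-1) ^ n * F n + 1`, every partial sum is `±(F N ± 1)`, and the identity
`F a * L n = F (a + n) + (-1) ^ n * F (a - n)` (for integer `a`) factors each `F N ± 1`.

For maximality, `F (m + t) ≡ F (m - 1) * F t` and `F (m - 1) ^ 2 ≡ (-1) ^ m` modulo `F m`, so
`F m ∣ F (m + t) + c` forces `F m ∣ (-1) ^ m * F t + c * F (m - 1)`; for `t + 3 ≤ m` the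
right side is nonzero and smaller than `F m` in absolute value. The boundary indices
`m = 2k, 2k + 1` are excluded by `F (2k) ∣ F (4k)` and by `F (4k) - 1 = F (2k + 1) * L (2k - 1)`,
`F (4k + 1) + 1 = F (2k + 1) * L (2k)`, each of which would force `F m ∣ 2`; and
`|F N ± 1| < F m` once `N < m`. -/

theorem fib_mul_lucas (a : ℤ) (n : ℕ) :
    Int.fib a * lucas n = Int.fib (a + n) + (-1) ^ n * Int.fib (a - n) := by
  induction n using Nat.twoStepInduction generalizing a with
  | zero =>
    rw [lucas]
    push_cast
    rw [add_zero, sub_zero]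
    ring
  | one =>
    have h := Int.fib_add_two (a - 1)
    rw [show a - 1 + 2 = a + 1 by ring, sub_add_cancel] at h
    simp only [lucas, Nat.cast_one, pow_one]
    linear_combination -h
  | more n ih₀ ih₁ =>
    have up := Int.fib_add_two (a + n)
    have down := Int.fib_add_two (a - (n + 2 : ℕ))
    rw [show a + n + 2 = a + (n + 2 : ℕ) by push_cast; ring] at up
    rw [show a - (n + 2 : ℕ) + 2 = a - n by push_cast; ring,
      show a - (n + 2 : ℕ) + 1 = a - (n + 1 : ℕ) by push_cast; ring] at down
    rw [lucas, Nat.cast_add, mul_add, ih₀, ih₁, up, down,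
      show a + (n + 1 : ℕ) = a + n + 1 by push_cast; ring]
    ring

theorem fib_mul_lucas_of_eq_add {a n b N : ℕ} (hb : a = n + b) (hN : N = a + n) :
    (Nat.fib a : ℤ) * lucas n = Nat.fib N + (-1) ^ n * Nat.fib b := by
  have h := fib_mul_lucas a n
  rw [show (a : ℤ) + n = N by omega, show (a : ℤ) - n = b by omega] at h
  simpa using h

theorem fib_mul_lucas_of_add_eq {a n b N : ℕ} (hb : n = a + b) (hN : N = a + n) :
    (Nat.fib a : ℤ) * lucas n = Nat.fib N - (-1) ^ a * Nat.fib b := by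
  subst hb
  have h := fib_mul_lucas a (a + b)
  rw [show (a : ℤ) + (a + b : ℕ) = N by omega, show (a : ℤ) - (a + b : ℕ) = -b by omega,
    Int.fib_neg_natCast] at h
  simp only [Int.fib_natCast] at h
  rw [h, ← mul_assoc, ← pow_add, show a + b + (b + 1) = a + 1 + 2 * b by ring, pow_add, pow_mul,
    neg_one_sq, one_pow, mul_one, pow_succ]
  ring

theorem signedFibSum_add_one (n : ℕ) : signedFibSum (n + 1) = (-1) ^ n * Nat.fib n + 1 := by
  induction n with
  | zero => simp [signedFibSum]
  | succ n ih =>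
    rw [signedFibSum, Finset.sum_Icc_succ_top (by omega), ← signedFibSum, ih, Nat.fib_add_two]
    push_cast
    ring

theorem fib_mul_fib_add_modEq (n t : ℕ) :
    (Nat.fib n : ℤ) * Nat.fib (n + 1 + t) ≡ (-1) ^ (n + 1) * Nat.fib t
      [ZMOD Nat.fib (n + 1)] := by
  have cassini := Int.fib_succ_mul_fib_pred_sub_fib_sq n
  rw [Int.natAbs_natCast, Int.fib_natCast, ← Nat.cast_succ, Int.fib_natCast] at cassini
  rw [Int.modEq_iff_dvd]
  refine ⟨-(Int.fib (n - 1) * Nat.fib t + Nat.fib n * Nat.fib (t + 1)), ?_⟩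
  rw [add_right_comm, Nat.fib_add]
  push_cast
  linear_combination (Nat.fib t : ℤ) * cassini

theorem signedFibSum_four_mul {k : ℕ} (hk : 1 ≤ k) :
    signedFibSum (4 * k) = -((Nat.fib (2 * k) : ℤ) * lucas (2 * k - 1)) := by
  rw [show 4 * k = 4 * k - 1 + 1 by omega, signedFibSum_add_one,
    Odd.neg_one_pow ⟨2 * k - 1, by omega⟩,
    fib_mul_lucas_of_eq_add (b := 1) (N := 4 * k - 1) (by omega) (by omega),
    Odd.neg_one_pow ⟨k - 1, by omega⟩, Nat.fib_one]
  ring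

theorem signedFibSum_four_mul_add_one {k : ℕ} (hk : 1 ≤ k) :
    signedFibSum (4 * k + 1) = (Nat.fib (2 * k - 1) : ℤ) * lucas (2 * k + 1) := by
  rw [signedFibSum_add_one, Even.neg_one_pow ⟨2 * k, by ring⟩,
    fib_mul_lucas_of_add_eq (b := 2) (N := 4 * k) (by omega) (by omega),
    Odd.neg_one_pow ⟨k - 1, by omega⟩, Nat.fib_two]
  ring

theorem signedFibSum_four_mul_add_two (k : ℕ) :
    signedFibSum (4 * k + 2) = -((Nat.fib (2 * k) : ℤ) * lucas (2 * k + 1)) := by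
  rw [signedFibSum_add_one, Odd.neg_one_pow ⟨2 * k, by ring⟩,
    fib_mul_lucas_of_add_eq (b := 1) (N := 4 * k + 1) (by omega) (by omega),
    Even.neg_one_pow ⟨k, by ring⟩, Nat.fib_one]
  ring

theorem signedFibSum_four_mul_add_three (k : ℕ) :
    signedFibSum (4 * k + 3) = (Nat.fib (2 * k + 2) : ℤ) * lucas (2 * k) := by
  rw [signedFibSum_add_one, Even.neg_one_pow ⟨2 * k + 1, by ring⟩,
    fib_mul_lucas_of_eq_add (b := 2) (N := 4 * k + 2) (by omega) (by omega),
    Even.neg_one_pow ⟨k, by ring⟩, Nat.fib_two]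
  ring

theorem not_fib_dvd_fib_add_of_lt {m N : ℕ} {c : ℤ} (hc : |c| = 1) (hN : 4 ≤ N)
    (hNm : N < m) : ¬ (Nat.fib m : ℤ) ∣ Nat.fib N + c := by
  obtain ⟨M, rfl⟩ : ∃ M, N = M + 4 := ⟨N - 4, by omega⟩
  have h3 : 2 ≤ Nat.fib (M + 3) := le_trans (by decide) (Nat.fib_mono (show 3 ≤ M + 3 by omega))
  have hstep : Nat.fib (M + 5) = Nat.fib (M + 3) + Nat.fib (M + 4) := Nat.fib_add_two
  have h4 : Nat.fib (M + 3) ≤ Nat.fib (M + 4) := Nat.fib_le_fib_succ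
  have hle : Nat.fib (M + 5) ≤ Nat.fib m := Nat.fib_mono (by omega)
  obtain ⟨hc₁, hc₂⟩ := abs_le.mp hc.le
  intro hdvd
  have hzero := Int.eq_zero_of_abs_lt_dvd hdvd (abs_lt.mpr ⟨by omega, by omega⟩)
  omega

theorem not_fib_dvd_fib_add_of_le {m N : ℕ} {c : ℤ} (hc : |c| = 1) (hm : 5 ≤ m)
    (hmN : m ≤ N) (hNm : N + 3 ≤ 2 * m) : ¬ (Nat.fib m : ℤ) ∣ Nat.fib N + c := by
  obtain ⟨p, rfl⟩ : ∃ p, m = p + 3 := ⟨m - 3, by omega⟩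
  obtain ⟨t, rfl⟩ : ∃ t, N = p + 2 + 1 + t := ⟨N - (p + 3), by omega⟩
  intro hdvd
  have hred : (Nat.fib (p + 3) : ℤ) ∣ (-1) ^ (p + 3) * Nat.fib t + c * Nat.fib (p + 2) := by
    rw [← Int.modEq_zero_iff_dvd] at hdvd ⊢
    calc (-1) ^ (p + 3) * Nat.fib t + c * Nat.fib (p + 2)
        ≡ Nat.fib (p + 2) * Nat.fib (p + 2 + 1 + t) + c * Nat.fib (p + 2)
          [ZMOD Nat.fib (p + 3)] :=
          ((fib_mul_fib_add_modEq (p + 2) t).add_right _).symm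
      _ = Nat.fib (p + 2) * (Nat.fib (p + 2 + 1 + t) + c) := by ring
      _ ≡ Nat.fib (p + 2) * 0 [ZMOD Nat.fib (p + 3)] := hdvd.mul_left _
      _ = 0 := mul_zero _
  have hsign : |((-1) ^ (p + 3) * Nat.fib t : ℤ)| = Nat.fib t := by simp
  have hc' : |(c * Nat.fib (p + 2) : ℤ)| = Nat.fib (p + 2) := by simp [abs_mul, hc]
  have ht : Nat.fib t ≤ Nat.fib p := Nat.fib_mono (by omega)
  have hp : Nat.fib p < Nat.fib (p + 1) := Nat.fib_lt_fib_succ (by omega)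
  have h₂ : Nat.fib (p + 2) = Nat.fib p + Nat.fib (p + 1) := Nat.fib_add_two
  have h₃ : Nat.fib (p + 3) = Nat.fib (p + 1) + Nat.fib (p + 2) := Nat.fib_add_two
  have hlt : |(-1) ^ (p + 3) * Nat.fib t + c * Nat.fib (p + 2)| < Nat.fib (p + 3) := by
    refine (abs_add_le _ _).trans_lt ?_
    rw [hsign, hc']
    omega
  have hzero := Int.eq_zero_of_abs_lt_dvd hred hlt
  rw [← neg_eq_of_add_eq_zero_right hzero, abs_neg, hsign] at hc'
  omega

theorem not_fib_dvd_fib_add {m N : ℕ} {c : ℤ} (hc : |c| = 1) (hm : 5 ≤ m) (hN : 4 ≤ N)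
    (hNm : N + 3 ≤ 2 * m) : ¬ (Nat.fib m : ℤ) ∣ Nat.fib N + c := by
  rcases lt_or_ge N m with hlt | hle
  · exact not_fib_dvd_fib_add_of_lt hc hN hlt
  · exact not_fib_dvd_fib_add_of_le hc hm hle hNm

theorem not_fib_dvd_two {m : ℕ} (hm : 4 ≤ m) : ¬ (Nat.fib m : ℤ) ∣ 2 := by
  intro h
  have h₁ := Int.le_of_dvd two_pos h
  have h₂ : 3 ≤ Nat.fib m := le_trans (by decide) (Nat.fib_mono hm)
  omega

theorem not_fib_dvd_signedFibSum_four_mul {k m : ℕ} (hk : 2 ≤ k) (hm : 2 * k < m) :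
    ¬ (Nat.fib m : ℤ) ∣ signedFibSum (4 * k) := by
  rw [show 4 * k = 4 * k - 1 + 1 by omega, signedFibSum_add_one,
    Odd.neg_one_pow ⟨2 * k - 1, by omega⟩, neg_one_mul, ← dvd_neg, neg_add, neg_neg]
  exact not_fib_dvd_fib_add (by simp) (by omega) (by omega) (by omega)

theorem not_fib_dvd_signedFibSum_four_mul_add_one {k m : ℕ} (hk : 2 ≤ k) (hm : 2 * k - 1 < m) :
    ¬ (Nat.fib m : ℤ) ∣ signedFibSum (4 * k + 1) := by
  rw [signedFibSum_add_one, Even.neg_one_pow ⟨2 * k, by ring⟩, one_mul]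
  intro hdvd
  rcases (by omega : m = 2 * k ∨ m = 2 * k + 1 ∨ 2 * k + 2 ≤ m) with rfl | rfl | hm
  · have hfib : (Nat.fib (2 * k) : ℤ) ∣ Nat.fib (4 * k) :=
      Int.natCast_dvd_natCast.mpr (Nat.fib_dvd _ _ ⟨2, by ring⟩)
    exact not_fib_dvd_two (m := 2 * k) (by omega)
      (((dvd_add_right hfib).mp hdvd).trans (one_dvd 2))
  · have hlucas := fib_mul_lucas_of_eq_add (a := 2 * k + 1) (n := 2 * k - 1) (b := 2) (N := 4 * k)
      (by omega) (by omega)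
    rw [Odd.neg_one_pow ⟨k - 1, by omega⟩, Nat.fib_two] at hlucas
    have := dvd_sub hdvd (Dvd.intro _ hlucas)
    exact not_fib_dvd_two (m := 2 * k + 1) (by omega) (by norm_num at this; exact this)
  · exact not_fib_dvd_fib_add (by simp) (by omega) (by omega) (by omega) hdvd

theorem not_fib_dvd_signedFibSum_four_mul_add_two {k m : ℕ} (hk : 2 ≤ k) (hm : 2 * k < m) :
    ¬ (Nat.fib m : ℤ) ∣ signedFibSum (4 * k + 2) := by
  rw [signedFibSum_add_one, Odd.neg_one_pow ⟨2 * k, by ring⟩, neg_one_mul, ← dvd_neg, neg_add,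
    neg_neg]
  intro hdvd
  rcases (by omega : m = 2 * k + 1 ∨ 2 * k + 2 ≤ m) with rfl | hm
  · have hlucas := fib_mul_lucas_of_eq_add (a := 2 * k + 1) (n := 2 * k) (b := 1) (N := 4 * k + 1)
      (by omega) (by omega)
    rw [Even.neg_one_pow ⟨k, by ring⟩, Nat.fib_one] at hlucas
    have := dvd_sub (Dvd.intro _ hlucas) hdvd
    exact not_fib_dvd_two (m := 2 * k + 1) (by omega) (by norm_num at this; exact this)
  · exact not_fib_dvd_fib_add (by simp) (by omega) (by omega) (by omega) hdvd

theorem not_fib_dvd_signedFibSum_four_mul_add_three {k m : ℕ} (hk : 2 ≤ k)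
    (hm : 2 * k + 2 < m) : ¬ (Nat.fib m : ℤ) ∣ signedFibSum (4 * k + 3) := by
  rw [signedFibSum_add_one, Even.neg_one_pow ⟨2 * k + 1, by ring⟩, one_mul]
  exact not_fib_dvd_fib_add (by simp) (by omega) (by omega) (by omega)

/-- Factorizations of the partial sums of the signed Fibonacci sequence, and
the maximal index of a Fibonacci number dividing them. -/
theorem signed_fib_partial_sums :
    (∀ k : ℕ, 1 ≤ k →
      signedFibSum (4 * k) = -((Nat.fib (2 * k) : ℤ) * lucas (2 * k - 1)) ∧
      signedFibSum (4 * k + 1) = (Nat.fib (2 * k - 1) : ℤ) * lucas (2 * k + 1) ∧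
      signedFibSum (4 * k + 2) = -((Nat.fib (2 * k) : ℤ) * lucas (2 * k + 1)) ∧
      signedFibSum (4 * k + 3) = (Nat.fib (2 * k + 2) : ℤ) * lucas (2 * k)) ∧
    (∀ k : ℕ, 2 ≤ k →
      ((Nat.fib (2 * k) : ℤ) ∣ signedFibSum (4 * k) ∧
        ∀ m : ℕ, 2 * k < m → ¬ (Nat.fib m : ℤ) ∣ signedFibSum (4 * k)) ∧
      ((Nat.fib (2 * k - 1) : ℤ) ∣ signedFibSum (4 * k + 1) ∧
        ∀ m : ℕ, 2 * k - 1 < m → ¬ (Nat.fib m : ℤ) ∣ signedFibSum (4 * k + 1)) ∧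
      ((Nat.fib (2 * k) : ℤ) ∣ signedFibSum (4 * k + 2) ∧
        ∀ m : ℕ, 2 * k < m → ¬ (Nat.fib m : ℤ) ∣ signedFibSum (4 * k + 2)) ∧
      ((Nat.fib (2 * k + 2) : ℤ) ∣ signedFibSum (4 * k + 3) ∧
        ∀ m : ℕ, 2 * k + 2 < m → ¬ (Nat.fib m : ℤ) ∣ signedFibSum (4 * k + 3))) := by
  refine ⟨fun k hk => ⟨signedFibSum_four_mul hk, signedFibSum_four_mul_add_one hk,
    signedFibSum_four_mul_add_two k, signedFibSum_four_mul_add_three k⟩, fun k hk => ?_⟩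
  refine ⟨⟨?_, fun m => not_fib_dvd_signedFibSum_four_mul hk⟩,
    ⟨?_, fun m => not_fib_dvd_signedFibSum_four_mul_add_one hk⟩,
    ⟨?_, fun m => not_fib_dvd_signedFibSum_four_mul_add_two hk⟩,
    ⟨?_, fun m => not_fib_dvd_signedFibSum_four_mul_add_three hk⟩⟩
  · rw [signedFibSum_four_mul (by omega), dvd_neg]
    exact dvd_mul_right _ _
  · rw [signedFibSum_four_mul_add_one (by omega)]
    exact dvd_mul_right _ _
  · rw [signedFibSum_four_mul_add_two, dvd_neg]
    exact dvd_mul_right _ _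
  · rw [signedFibSum_four_mul_add_three]
    exact dvd_mul_right _ _
end

section
/- Let U_n = F_{2n} (the Lucas sequence U(3,1), satisfying U_n = 3U_{n-1} − U_{n-2}), so that ∑_{i=1}^n U_i = F_{2n+1} − 1. Then for every n ≥ 1, the largest m such that U_m divides this partial sum is m = ⌈n/2⌉: that is, F_{2⌈n/2⌉} divides F_{2n+1} − 1, and for every m > ⌈n/2⌉, F_{2m} does not divide F_{2n+1} − 1. In particular, for odd n one has m_{n-1} + 1 = m_n, so the corresponding trick works for every sequence satisfying x_j = 3x_{j-1} − x_{j-2}. -/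
/-!
Write `n = 2k` or `n = 2k + 1`. The doubling formula `F_{2n+1} = F_{n+1}^2 + F_n^2` and
Cassini's identity `F_{2k} F_{2k+2} + 1 = F_{2k+1}^2` give
`F_{2n+1} - 1 = F_{2⌈n/2⌉} (F_{2k} + F_{2k+2})`.

Conversely, suppose `F_{2m} ∣ F_{2n+1} - 1` with `⌈n/2⌉ < m ≤ n` and write `n = m + t`.
Modulo `F_{2m}` the addition formula gives `F_{2n+1} ≡ F_{2m+1} F_{2t+1}` and Cassini gives
`F_{2m+1}^2 ≡ 1`, so `F_{2t+1} ≡ F_{2m+1} ≡ F_{2m-1}`. Both residues lie in `[1, F_{2m})`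
while `2t + 1 < 2m - 1`, a contradiction. For `m > n`, `F_{2m}` exceeds `F_{2n+1} - 1 > 0`.

For any `x` with `x_{j+2} = c x_{j+1} - x_j`, the pair sums satisfy
`x_a + x_{a+2t} = C_t(c) x_{a+t}` with `C_t` the Vieta–Lucas polynomials, since both sides obey
the same recurrence in `t`. Pairing the terms of a sum of odd length around its middle term
makes it a multiple of that term.
-/

open Nat Polynomial Polynomial.Chebyshev

theorem fib_two_mul_mul_fib_two_mul_add_two_add_one (k : ℕ) :
    fib (2 * k) * fib (2 * k + 2) + 1 = fib (2 * k + 1) ^ 2 := by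
  have h := Int.fib_succ_mul_fib_pred_sub_fib_sq (2 * k + 1 : ℕ)
  rw [show ((2 * k + 1 : ℕ) : ℤ) + 1 = (2 * k + 2 : ℕ) by push_cast; ring,
    show ((2 * k + 1 : ℕ) : ℤ) - 1 = (2 * k : ℕ) by push_cast; ring] at h
  simp only [Int.fib_natCast, Int.natAbs_natCast, (odd_two_mul_add_one k).neg_one_pow] at h
  lia

theorem fib_two_mul_add_one_eq_mul_add_one (n : ℕ) :
    fib (2 * n + 1) =
      fib (2 * ((n + 1) / 2)) * (fib (2 * (n / 2)) + fib (2 * (n / 2) + 2)) + 1 := by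
  obtain ⟨k, rfl | rfl⟩ := even_or_odd' n
  · have hk : (2 * k + 1) / 2 = k := by omega
    rw [hk, mul_div_cancel_left₀ k two_ne_zero, fib_two_mul_add_one,
      ← fib_two_mul_mul_fib_two_mul_add_two_add_one]
    ring
  · have hk : (2 * k + 1 + 1) / 2 = k + 1 := by omega
    have hk' : (2 * k + 1) / 2 = k := by omega
    rw [hk, hk', fib_two_mul_add_one, ← fib_two_mul_mul_fib_two_mul_add_two_add_one,
      mul_add_one]
    ring

theorem fib_add_add_one_modEq (a b : ℕ) :
    fib (a + b + 1) ≡ fib (a + 1) * fib (b + 1) [MOD fib a] := by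
  rw [fib_add]
  exact Nat.modulus_mul_add_modEq_iff.mpr rfl

theorem fib_add_two_modEq (j : ℕ) : fib (j + 2) ≡ fib j [MOD fib (j + 1)] := by
  rw [fib_add_two]
  exact Nat.add_modEq_right

theorem fib_two_mul_add_one_sq_modEq_one (k : ℕ) :
    fib (2 * k + 1) ^ 2 ≡ 1 [MOD fib (2 * k)] := by
  rw [← fib_two_mul_mul_fib_two_mul_add_two_add_one]
  exact Nat.modulus_mul_add_modEq_iff.mpr rfl

theorem fib_two_mul_add_one_modEq_of_dvd {m t : ℕ}
    (h : fib (2 * m) ∣ fib (2 * (m + t) + 1) - 1) :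
    fib (2 * t + 1) ≡ fib (2 * m + 1) [MOD fib (2 * m)] := by
  have h1 : fib (2 * m + 2 * t + 1) ≡ 1 [MOD fib (2 * m)] := by
    rw [← mul_add]
    exact ((Nat.modEq_iff_dvd' (fib_pos.mpr (by omega))).mpr h).symm
  calc fib (2 * t + 1)
      = 1 * fib (2 * t + 1) := (one_mul _).symm
    _ ≡ fib (2 * m + 1) ^ 2 * fib (2 * t + 1) [MOD fib (2 * m)] :=
        ((fib_two_mul_add_one_sq_modEq_one m).mul_right _).symm
    _ = fib (2 * m + 1) * (fib (2 * m + 1) * fib (2 * t + 1)) := by ring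
    _ ≡ fib (2 * m + 1) * fib (2 * m + 2 * t + 1) [MOD fib (2 * m)] :=
        ((fib_add_add_one_modEq _ _).symm.mul_left _)
    _ ≡ fib (2 * m + 1) * 1 [MOD fib (2 * m)] := h1.mul_left _
    _ = fib (2 * m + 1) := mul_one _

theorem not_fib_two_mul_dvd_fib_two_mul_add_one_sub_one {n m : ℕ} (hn : 1 ≤ n)
    (hm : n + 1 < 2 * m) : ¬ fib (2 * m) ∣ fib (2 * n + 1) - 1 := by
  intro hdvd
  rcases le_or_gt m n with hmn | hnm
  · obtain ⟨t, rfl⟩ := Nat.exists_eq_add_of_le hmn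
    obtain ⟨m, rfl⟩ : ∃ m', m = m' + 2 := ⟨m - 2, by omega⟩
    have hcong : fib (2 * t + 1) ≡ fib (2 * m + 3) [MOD fib (2 * m + 4)] :=
      (fib_two_mul_add_one_modEq_of_dvd hdvd).trans (fib_add_two_modEq (2 * m + 3))
    have hlt : fib (2 * t + 1) < fib (2 * m + 3) :=
      (fib_mono (by omega)).trans_lt (fib_lt_fib_succ (n := 2 * m + 2) (by omega))
    exact hlt.ne (hcong.eq_of_lt_of_lt (hlt.trans (fib_lt_fib_succ (by omega)))
      (fib_lt_fib_succ (by omega)))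
  · have hgt : fib 2 < fib (2 * n + 1) := (fib_lt_fib le_rfl).mpr (by omega)
    have hpos : 0 < fib (2 * n + 1) - 1 := Nat.sub_pos_of_lt (fib_two ▸ hgt)
    have hle : fib (2 * n + 1) ≤ fib (2 * m) := fib_mono (by omega)
    have := Nat.le_of_dvd hpos hdvd
    omega

section SymmetricSums

variable {R : Type*} [CommRing R] {c : R}

theorem add_eq_eval_chebyshevC_mul {x : ℕ → R} (hx : ∀ j, x (j + 2) = c * x (j + 1) - x j) :
    ∀ t, x 0 + x (2 * t) = (C R t).eval c * x t
  | 0 => by simp [C_zero]; ring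
  | 1 => by simp [C_one, hx 0]
  | t + 2 => by
    have h1 : x 1 + x (2 * t + 3) = (C R (t + 1 : ℕ)).eval c * x (t + 2) :=
      add_eq_eval_chebyshevC_mul (x := fun j ↦ x (j + 1)) (fun j ↦ hx (j + 1)) (t + 1)
    have h2 : x 2 + x (2 * t + 2) = (C R t).eval c * x (t + 2) :=
      add_eq_eval_chebyshevC_mul (x := fun j ↦ x (j + 2)) (fun j ↦ hx (j + 2)) t
    have hC : C R ((t + 2 : ℕ) : ℤ) = X * C R ((t + 1 : ℕ) : ℤ) - C R (t : ℤ) := by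
      push_cast
      exact C_add_two R t
    rw [hC, eval_sub, eval_mul, eval_X, show 2 * (t + 2) = 2 * t + 2 + 2 by ring]
    linear_combination c * h1 - h2 + hx (2 * t + 2) + hx 0

theorem sum_range_two_mul_add_one_eq {x : ℕ → R} (hx : ∀ j, x (j + 2) = c * x (j + 1) - x j)
    (k : ℕ) :
    ∑ i ∈ Finset.range (2 * k + 1), x i =
      (∑ t ∈ Finset.range (k + 1), (C R t).eval c - 1) * x k := by
  induction k generalizing x with
  | zero => simp [C_zero]; ring
  | succ k ih =>
    have hinner := ih (x := fun j ↦ x (j + 1)) (fun j ↦ hx (j + 1))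
    have hpair := add_eq_eval_chebyshevC_mul hx (k + 1)
    rw [show 2 * (k + 1) + 1 = 2 * k + 1 + 1 + 1 by ring, Finset.sum_range_succ,
      Finset.sum_range_succ', hinner, Finset.sum_range_succ _ (k + 1)]
    linear_combination hpair

end SymmetricSums

/-- For the Fibonacci bisection U_n = F_{2n} (the Lucas sequence U(3,1)), whose
partial sum is F_{2n+1} - 1, the largest m with U_m dividing the sum of the first
n terms is m = ⌈n/2⌉; consequently, for odd n the trick extends to every integer
sequence satisfying x_j = 3 x_{j-1} - x_{j-2}. -/
theorem fib_bisection_max_index (n : ℕ) (hn : 1 ≤ n) :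
    (Nat.fib (2 * ((n + 1) / 2)) ∣ Nat.fib (2 * n + 1) - 1) ∧
    (∀ m : ℕ, (n + 1) / 2 < m → ¬ Nat.fib (2 * m) ∣ Nat.fib (2 * n + 1) - 1) ∧
    (n % 2 = 1 → ∃ z : ℤ, ∀ x : ℕ → ℤ,
      (∀ j, 3 ≤ j → x j = 3 * x (j - 1) - x (j - 2)) →
      ∑ i ∈ Finset.Icc 1 n, x i = z * x ((n + 1) / 2)) := by
  refine ⟨?_, fun m hm ↦ not_fib_two_mul_dvd_fib_two_mul_add_one_sub_one hn (by omega), ?_⟩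
  · rw [fib_two_mul_add_one_eq_mul_add_one n, Nat.add_sub_cancel]
    exact Dvd.intro _ rfl
  · intro hodd
    obtain ⟨k, rfl⟩ : ∃ k, n = 2 * k + 1 := ⟨n / 2, by omega⟩
    refine ⟨∑ t ∈ Finset.range (k + 1), (C ℤ t).eval 3 - 1, fun x hx ↦ ?_⟩
    have hshift : ∀ j, x (j + 1 + 2) = 3 * x (j + 1 + 1) - x (j + 1) :=
      fun j ↦ hx (j + 3) (by omega)
    rw [← Finset.Ico_add_one_right_eq_Icc, Finset.sum_Ico_eq_sum_range, Nat.add_sub_cancel,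
      show (2 * k + 1 + 1) / 2 = k + 1 by omega]
    simpa only [add_comm 1] using sum_range_two_mul_add_one_eq hshift k
end

section
/- Let n ≥ 1 and let x be an integer sequence (indexed from 1) satisfying the n-nacci recurrence x_j = x_{j-1} + x_{j-2} + ⋯ + x_{j-n} for all j > n. Then: (1) the sum of the first n terms equals the (n+1)st term, ∑_{i=1}^{n} x_i = x_{n+1}; (2) the sum of the first n+1 terms equals twice the (n+1)st term, ∑_{i=1}^{n+1} x_i = 2·x_{n+1}; and (3) the sum of the first 2n+2 terms equals four times the (2n+1)st term, ∑_{i=1}^{2n+2} x_i = 4·x_{2n+1}. -/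
/-!
Each term past the `n`-th is the sum of the window of `n` terms before it. Sliding that window by
one step gives `x (j + 1) = 2 x j - x (j - n)`, and the window ending before `2n + 2` is
`x (n + 2), …, x (2n + 1)`, so `∑_{i ≤ 2n+2} x i = ∑_{i ≤ n+1} x i + 2 x (2n + 2)
= 2 x (n + 1) + 2 (2 x (2n + 1) - x (n + 1)) = 4 x (2n + 1)`.
-/

open Finset

section Nacci

variable {M : Type*} [AddCommMonoid M]

theorem sum_Icc_one_sub_eq_sum_Ico (x : ℕ → M) {n j : ℕ} (h : n ≤ j) :
    ∑ t ∈ Icc 1 n, x (j - t) = ∑ i ∈ Ico (j - n) j, x i := by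
  rw [← Ico_add_one_right_eq_Icc, sum_Ico_reflect x 1 (by omega)]
  congr 2
  omega

variable {n : ℕ} {x : ℕ → M}

theorem nacci_eq_sum_Ico (hrec : ∀ j, n < j → x j = ∑ t ∈ Icc 1 n, x (j - t))
    {j : ℕ} (hj : n < j) : x j = ∑ i ∈ Ico (j - n) j, x i := by
  rw [hrec j hj, sum_Icc_one_sub_eq_sum_Ico x hj.le]

theorem nacci_succ_add_sub (hrec : ∀ j, n < j → x j = ∑ t ∈ Icc 1 n, x (j - t))
    {j : ℕ} (hj : n < j) : x (j + 1) + x (j - n) = x j + x j := by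
  have hwin : x (j - n) + ∑ i ∈ Ico (j - n + 1) (j + 1), x i
      = ∑ i ∈ Ico (j - n) j, x i + x j := by
    rw [← sum_eq_sum_Ico_succ_bot (by omega), sum_Ico_succ_top (by omega)]
  rw [show j - n + 1 = j + 1 - n by omega, ← nacci_eq_sum_Ico hrec (by omega),
    ← nacci_eq_sum_Ico hrec hj] at hwin
  rw [add_comm, hwin, add_comm]

end Nacci

theorem n_nacci_trick_general (n : ℕ) (x : ℕ → ℤ)
    (hrec : ∀ j, n < j → x j = ∑ t ∈ Finset.Icc 1 n, x (j - t)) :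
    (∑ i ∈ Finset.Icc 1 n, x i) = x (n + 1) ∧
    (∑ i ∈ Finset.Icc 1 (n + 1), x i) = 2 * x (n + 1) ∧
    (∑ i ∈ Finset.Icc 1 (2 * n + 2), x i) = 4 * x (2 * n + 1) := by
  have h₁ : ∑ i ∈ Icc 1 n, x i = x (n + 1) := by
    rw [nacci_eq_sum_Ico hrec (by omega), Nat.add_sub_cancel_left, Ico_add_one_right_eq_Icc]
  have h₂ : ∑ i ∈ Icc 1 (n + 1), x i = 2 * x (n + 1) := by
    rw [sum_Icc_succ_top (by omega), h₁, two_mul]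
  have hlast : x (2 * n + 2) = ∑ i ∈ Ico (n + 1 + 1) (2 * n + 2), x i := by
    rw [nacci_eq_sum_Ico hrec (by omega)]
    congr 2; omega
  have hstep := nacci_succ_add_sub hrec (j := 2 * n + 1) (by omega)
  rw [show 2 * n + 1 - n = n + 1 by omega] at hstep
  refine ⟨h₁, h₂, ?_⟩
  calc ∑ i ∈ Icc 1 (2 * n + 2), x i
      = ∑ i ∈ Icc 1 (n + 1), x i + ∑ i ∈ Ico (n + 1 + 1) (2 * n + 2), x i + x (2 * n + 2) := by
        rw [← Ico_add_one_right_eq_Icc, ← Ico_add_one_right_eq_Icc, sum_Ico_succ_top (by omega),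
          sum_Ico_consecutive x (by omega) (by omega)]
    _ = 2 * x (n + 1) + 2 * x (2 * n + 2) := by rw [h₂, ← hlast]; ring
    _ = 4 * x (2 * n + 1) := by linear_combination 2 * hstep

/-- For every n-nacci-like integer sequence (indexed from 1, each term past the
n-th being the sum of the previous n terms): the sum of the first n terms is the
(n+1)-st term, the sum of the first n+1 terms is twice the (n+1)-st term, and the
sum of the first 2n+2 terms is four times the (2n+1)-st term. -/
theorem n_nacci_trick (n : ℕ) (hn : 1 ≤ n) (x : ℕ → ℤ)
    (hrec : ∀ j, n < j → x j = ∑ t ∈ Finset.Icc 1 n, x (j - t)) :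
    (∑ i ∈ Finset.Icc 1 n, x i) = x (n + 1) ∧
    (∑ i ∈ Finset.Icc 1 (n + 1), x i) = 2 * x (n + 1) ∧
    (∑ i ∈ Finset.Icc 1 (2 * n + 2), x i) = 4 * x (2 * n + 1) :=
  n_nacci_trick_general n x hrec
end
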